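/- Fix positive integers b, c. In the rank 2 quantum cluster algebra, for every nonnegative integer n the cluster variable X_4 satisfies X_4^n = \sum_{p=0}^{n} \sum_{l=0}^{bp} [n choose p]_{v^b} [bp choose l]_{v^c} X^{(-bp, -n + cl)}, where X^{(a_1,a_2)} = v^{a_1 a_2} X_1^{a_1} X_2^{a_2} denotes the normalized monomial. -/

import Mathlib

open Finset

noncomputable section

/-- Field of rational functions over ℚ, containing `ℤ[w^{±1}]`. -/
abbrev KK : Type := RatFunc ℚ

/-- The indeterminate `w`. -/
def wvar : KK := RatFunc.X

/-- The bar-invariant quantum integer `[n]_u = (u^n - u^{-n})/(u - u⁻¹)`. -/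
def qint (u : KK) (n : ℤ) : KK := (u ^ n - u ^ (-n)) / (u - u⁻¹)

/-- The bar-invariant quantum binomial coefficient. -/
def qbinom (u : KK) (n : ℤ) (k : ℕ) : KK :=
  (∏ i ∈ Finset.range k, qint u (n - i)) / (∏ i ∈ Finset.range k, qint u ((i : ℤ) + 1))
/-- The normalized (bar-invariant) quantum torus monomial `X^{(a,b)} = v^{ab} X_1^a X_2^b`. -/
def Xmono {F : Type*} [DivisionRing F] [Algebra KK F] (X1 X2 : F) (a b : ℤ) : F :=
  algebraMap KK F (wvar ^ (a * b)) * (X1 ^ a * X2 ^ b)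

/-! In the quantum torus, `X₄ = (v^b X₃^b + 1) X₂⁻¹` and `X₃ = (v^c X₂^c + 1) X₁⁻¹`, and in both
cases `P = v^d Y^d`, `Q = Z⁻¹` satisfy `Q P = v^{2d} P Q`. For such a pair the quantum binomial
theorem `((P + 1) Q)^n = ∑ₚ v^{dp(n-1)} [n choose p]_{v^d} P^p Q^n` holds, by induction on `n`
through the quantum Pascal rule. Expanding `X₄^n` this way, then each `X₃^{bp}`, and commuting
the powers of `X₂` past those of `X₁⁻¹` leaves the normalized monomials with exactly the stated
coefficients. -/

lemma wvar_ne_zero : wvar ≠ 0 := RatFunc.X_ne_zero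

lemma intDegree_wvar_zpow (m : ℤ) : (wvar ^ m).intDegree = m := by
  obtain ⟨k, rfl | rfl⟩ := Int.eq_nat_or_neg m <;>
    simp [wvar, RatFunc.intDegree_inv, ← RatFunc.algebraMap_X, ← map_pow,
      RatFunc.intDegree_polynomial]

lemma wvar_zpow_injective : Function.Injective (wvar ^ · : ℤ → KK) := fun a b h => by
  simpa only [intDegree_wvar_zpow] using congrArg RatFunc.intDegree h

lemma qint_wvar_pow_ne_zero {d : ℕ} (hd : d ≠ 0) {k : ℤ} (hk : k ≠ 0) :
    qint (wvar ^ d) k ≠ 0 := by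
  have key (m : ℤ) (hm : m ≠ 0) : wvar ^ m - wvar ^ (-m) ≠ 0 := fun h => by
    have := wvar_zpow_injective (sub_eq_zero.1 h)
    omega
  rw [qint, ← zpow_natCast, ← zpow_mul, ← zpow_mul, ← zpow_neg_one, ← zpow_mul,
    ← neg_mul_eq_mul_neg, mul_neg_one]
  exact div_ne_zero (key _ (mul_ne_zero (by exact_mod_cast hd) hk)) (key _ (by exact_mod_cast hd))

lemma qint_add {u : KK} (hu : u ≠ 0) (m k : ℤ) :
    qint u (m + k) = u ^ k * qint u m + u ^ (-m) * qint u k := by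
  simp only [qint, ← mul_div_assoc, ← add_div, mul_sub, ← zpow_add₀ hu]
  congr 1
  ring_nf

lemma qbinom_zero_right (u : KK) (n : ℤ) : qbinom u n 0 = 1 := by simp [qbinom]

lemma qbinom_eq_zero_of_lt (u : KK) {n k : ℕ} (h : n < k) : qbinom u n k = 0 := by
  rw [qbinom, prod_eq_zero (mem_range.2 h) (by simp [qint]), zero_div]

lemma qbinom_succ_succ {u : KK} (hu : u ≠ 0) (hq : ∀ k : ℕ, qint u (k + 1) ≠ 0) (n p : ℕ) :
    qbinom u (n + 1) (p + 1) =
      u ^ ((p : ℤ) + 1) * qbinom u n (p + 1) + u ^ ((p : ℤ) - n) * qbinom u n p := by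
  have hsplit : qint u (n + 1) =
      u ^ ((p : ℤ) + 1) * qint u (n - p) + u ^ ((p : ℤ) - n) * qint u (p + 1) := by
    have := qint_add hu ((n : ℤ) - p) (p + 1)
    rwa [neg_sub, ← add_assoc, sub_add_cancel] at this
  have hnum : ∏ i ∈ range (p + 1), qint u ((n : ℤ) + 1 - i) =
      qint u (n + 1) * ∏ i ∈ range p, qint u (n - i) := by
    rw [prod_range_succ']
    simp only [Nat.cast_add, Nat.cast_one, Nat.cast_zero, sub_zero, add_sub_add_right_eq_sub,
      mul_comm]
  simp only [qbinom, hnum, prod_range_succ _ p, hsplit]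
  have := prod_ne_zero_iff.2 fun i (_ : i ∈ range p) => hq i
  have := hq p
  field_simp

def QCommute {R A : Type*} [CommSemiring R] [Semiring A] [Algebra R A] (t : R) (x y : A) : Prop :=
  y * x = t • (x * y)

namespace QCommute

section Semiring

variable {R A : Type*} [CommSemiring R] [Semiring A] [Algebra R A] {s t : R} {x x' y y' : A}

theorem of_commute (h : Commute x y) : QCommute (1 : R) x y := by
  rw [QCommute, one_smul, h.eq]

theorem mul_left (h : QCommute s x y) (h' : QCommute t x' y) : QCommute (s * t) (x * x') y := by
  rw [QCommute, ← mul_assoc, h, smul_mul_assoc, mul_assoc, h', mul_smul_comm, smul_smul,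
    mul_assoc]

theorem mul_right (h : QCommute s x y) (h' : QCommute t x y') : QCommute (s * t) x (y * y') := by
  rw [QCommute, mul_assoc, h', mul_smul_comm, ← mul_assoc, h, smul_mul_assoc, smul_smul,
    mul_assoc, mul_comm s]

theorem pow_left (h : QCommute t x y) : ∀ m : ℕ, QCommute (t ^ m) (x ^ m) y
  | 0 => by simpa using of_commute (Commute.one_left y)
  | m + 1 => by simpa only [pow_succ] using (h.pow_left m).mul_left h

theorem pow_right (h : QCommute t x y) : ∀ k : ℕ, QCommute (t ^ k) x (y ^ k)
  | 0 => by simpa using of_commute (Commute.one_right x)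
  | k + 1 => by simpa only [pow_succ] using (h.pow_right k).mul_right h

theorem smul_left (h : QCommute t x y) (r : R) : QCommute t (r • x) y := by
  rw [QCommute, mul_smul_comm, h, smul_mul_assoc, smul_comm]

theorem smul_pow_left (h : QCommute (t ^ 2) x y) (r : R) (d : ℕ) :
    QCommute ((t ^ d) ^ 2) (r • x ^ d) y := by
  rw [← pow_mul, mul_comm, pow_mul]
  exact (h.pow_left d).smul_left r

end Semiring

section DivisionRing

variable {K A : Type*} [Field K] [DivisionRing A] [Algebra K A] {t : K} {x y P : A}

theorem symm (h : QCommute t x y) (ht : t ≠ 0) : QCommute t⁻¹ y x := by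
  rw [QCommute, h, inv_smul_smul₀ ht]

theorem inv_right (h : QCommute t x y) (ht : t ≠ 0) (hy : y ≠ 0) : QCommute t⁻¹ x y⁻¹ := by
  rw [QCommute, eq_inv_smul_iff₀ ht]
  calc t • (y⁻¹ * x) = y⁻¹ * (t • (x * y)) * y⁻¹ := by
        rw [mul_smul_comm, smul_mul_assoc, mul_assoc, mul_assoc, mul_inv_cancel₀ hy, mul_one]
    _ = x * y⁻¹ := by rw [← h, ← mul_assoc, inv_mul_cancel₀ hy, one_mul]

theorem inv_left (h : QCommute t x y) (ht : t ≠ 0) (hx : x ≠ 0) : QCommute t⁻¹ x⁻¹ y := by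
  simpa using ((h.symm ht).inv_right (inv_ne_zero ht) hx).symm (inv_ne_zero (inv_ne_zero ht))

theorem add_one_mul_inv (h : QCommute t x y) (ht : t ≠ 0) (hx : x ≠ 0) (hy : y ≠ 0)
    (hP : Commute P y) : QCommute t ((P + 1) * x⁻¹) y⁻¹ := by
  simpa using (of_commute (hP.add_left (Commute.one_left y)).inv_right₀).mul_left
    ((h.inv_right ht hy).inv_left (inv_ne_zero ht) hx)

end DivisionRing

end QCommute

theorem sum_range_add_sum_range_shift {M : Type*} [AddCommMonoid M] (f g : ℕ → M) {n : ℕ}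
    (hg : g (n + 1) = 0) :
    ∑ p ∈ range (n + 1), f p + ∑ p ∈ range (n + 1), g p =
      ∑ p ∈ range (n + 1), (f p + g (p + 1)) + g 0 := by
  rw [sum_add_distrib, add_assoc, ← sum_range_succ', sum_range_succ g (n + 1), hg, add_zero]

theorem zpow_mul_qbinom_succ_succ {u : KK} (hu : u ≠ 0) (hq : ∀ k : ℕ, qint u (k + 1) ≠ 0)
    (n p : ℕ) :
    u ^ (((p + 1 : ℕ) : ℤ) * ((n + 1 : ℕ) - 1)) * qbinom u (n + 1 : ℕ) (p + 1) =
      u ^ ((p : ℤ) * (n - 1)) * qbinom u n p * (u ^ 2) ^ p +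
        u ^ (((p + 1 : ℕ) : ℤ) * (n - 1)) * qbinom u n (p + 1) * (u ^ 2) ^ (p + 1) := by
  have e (a b c : ℤ) (m : ℕ) (h : a + b = 2 * m + c) : u ^ a * u ^ b = u ^ c * (u ^ 2) ^ m := by
    rw [← pow_mul, ← zpow_natCast, ← zpow_add₀ hu, ← zpow_add₀ hu]
    congr 1
    push_cast
    linarith
  push_cast
  rw [qbinom_succ_succ hu hq, mul_add, ← mul_assoc, ← mul_assoc,
    e _ _ ((p + 1) * (n - 1)) (p + 1) (by push_cast; ring), e _ _ (p * (n - 1)) p (by ring)]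
  ring

theorem add_one_mul_pow_eq_sum_qbinom {A : Type*} [Ring A] [Algebra KK A] {u : KK} (hu : u ≠ 0)
    (hq : ∀ k : ℕ, qint u (k + 1) ≠ 0) {P Q : A} (h : QCommute (u ^ 2) P Q) (n : ℕ) :
    ((P + 1) * Q) ^ n =
      ∑ p ∈ range (n + 1), (u ^ ((p : ℤ) * (n - 1)) * qbinom u n p) • (P ^ p * Q ^ n) := by
  induction n with
  | zero => simp [qbinom_zero_right]
  | succ n ih =>
    have hterm (p : ℕ) : (P + 1) * Q * (P ^ p * Q ^ n) =
        (u ^ 2) ^ p • (P ^ (p + 1) * Q ^ (n + 1)) + (u ^ 2) ^ p • (P ^ p * Q ^ (n + 1)) := by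
      rw [mul_assoc, ← mul_assoc Q, h.pow_left p, smul_mul_assoc, mul_smul_comm, ← smul_add,
        mul_assoc, ← pow_succ', add_mul, one_mul, ← mul_assoc, ← pow_succ']
    rw [pow_succ', ih, mul_sum]
    simp only [mul_smul_comm, hterm, smul_add, smul_smul]
    rw [sum_add_distrib, sum_range_add_sum_range_shift, sum_range_succ' _ (n + 1)]
    · congr 1
      · refine sum_congr rfl fun p _ => ?_
        rw [← add_smul, zpow_mul_qbinom_succ_succ hu hq]
      · simp [qbinom_zero_right]
    · simp [qbinom_eq_zero_of_lt u (Nat.lt_succ_self n)]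

theorem pow_mul_inv_pow_mul_inv_pow_eq_Xmono {F : Type*} [DivisionRing F] [Algebra KK F]
    {X1 X2 : F} (h : QCommute (wvar ^ 2 : KK) X1 X2) (h1 : X1 ≠ 0) (h2 : X2 ≠ 0) (k m n : ℕ) :
    X2 ^ k * X1⁻¹ ^ m * X2⁻¹ ^ n = wvar ^ (-(m : ℤ) * (k + n)) • Xmono X1 X2 (-m) (-n + k) := by
  have hw : (wvar ^ 2 : KK) ≠ 0 := pow_ne_zero 2 wvar_ne_zero
  rw [((h.inv_left hw h1).pow_left m).pow_right k, smul_mul_assoc, mul_assoc, Xmono,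
    ← Algebra.smul_def, smul_smul]
  congr 1
  · simp only [← zpow_natCast, inv_zpow', ← zpow_mul, ← zpow_add₀ wvar_ne_zero]
    congr 1
    ring
  · rw [add_comm, zpow_add₀ h2, zpow_neg, zpow_neg, zpow_natCast, zpow_natCast, zpow_natCast,
      inv_pow, inv_pow]

/-- Expansion of powers of `X_4`:
`X_4^n = ∑_{p=0}^n ∑_{l=0}^{bp} [n choose p]_{v^b} [bp choose l]_{v^c} X^{(-bp, -n+cl)}`. -/
theorem X4_power_expansion (b c : ℕ) (hb : 0 < b) (hc : 0 < c)
    (F : Type*) [DivisionRing F] [Algebra KK F] (X1 X2 : F)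
    (h1 : X1 ≠ 0) (h2 : X2 ≠ 0)
    (hcomm : X2 * X1 = algebraMap KK F (wvar ^ 2) * (X1 * X2)) (n : ℕ) :
    ((algebraMap KK F (wvar ^ b) *
        ((algebraMap KK F (wvar ^ c) * X2 ^ c + 1) * X1⁻¹) ^ b + 1) * X2⁻¹) ^ n =
      ∑ p ∈ Finset.range (n + 1), ∑ l ∈ Finset.range (b * p + 1),
        algebraMap KK F (qbinom (wvar ^ b) n p * qbinom (wvar ^ c) ((b : ℤ) * p) l) *
          Xmono X1 X2 (-((b : ℤ) * p)) (-(n : ℤ) + c * l) := by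
  have hw : (wvar ^ 2 : KK) ≠ 0 := pow_ne_zero 2 wvar_ne_zero
  have hq {d : ℕ} (hd : 0 < d) (k : ℕ) : qint (wvar ^ d) (k + 1) ≠ 0 :=
    qint_wvar_pow_ne_zero hd.ne' (by positivity)
  have h12 : QCommute (wvar ^ 2 : KK) X1 X2 := by rwa [QCommute, Algebra.smul_def]
  have h21 : QCommute (wvar ^ 2 : KK) X2 X1⁻¹ := by
    simpa using (h12.symm hw).inv_right (inv_ne_zero hw) h1
  have h32 := h12.add_one_mul_inv hw h1 h2 (((Commute.refl X2).pow_left c).smul_left (wvar ^ c))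
  simp only [← Algebra.smul_def]
  rw [add_one_mul_pow_eq_sum_qbinom (pow_ne_zero _ wvar_ne_zero) (hq hb) (h32.smul_pow_left _ b)]
  refine sum_congr rfl fun p _ => ?_
  rw [smul_pow, ← pow_mul, ← pow_mul,
    add_one_mul_pow_eq_sum_qbinom (pow_ne_zero _ wvar_ne_zero) (hq hc) (h21.smul_pow_left _ c),
    smul_sum, sum_mul, smul_sum]
  refine sum_congr rfl fun l _ => ?_
  rw [smul_pow, ← pow_mul, ← pow_mul, smul_mul_assoc, smul_mul_assoc, smul_mul_assoc,
    smul_mul_assoc, pow_mul_inv_pow_mul_inv_pow_eq_Xmono h12 h1 h2]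
  have hexp : (wvar ^ b) ^ ((p : ℤ) * (n - 1)) * wvar ^ (b * p) *
      (wvar ^ c) ^ ((l : ℤ) * (b * p - 1)) * wvar ^ (c * l) *
        wvar ^ (-(b * p : ℤ) * (c * l + n)) = 1 := by
    simp only [← zpow_natCast, ← zpow_mul, ← zpow_add₀ wvar_ne_zero]
    rw [← zpow_zero wvar]
    congr 1
    push_cast
    ring
  simp only [smul_smul]
  push_cast
  congr 1
  linear_combination qbinom (wvar ^ b) n p * qbinom (wvar ^ c) (b * p) l * hexp

end
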